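/- arXiv:2502.21080 — 5 statements merged into one kernel-verified Lean document; each statement's English description precedes it below -/
import Mathlib

section
/- Let V ≥ 1 be an integer, and for each channel c ∈ {1,…,V} let r_c > 0 be a real number, Λ_c > 0 a real number, and let R = ∑_{c=1}^V r_c, q > 0, and ℓ a real number. Define k*_c = (ℓ r_c)/R + (q r_c / R) · ∑_{j=1}^V r_j · log₂( (r_c Λ_j) / (r_j Λ_c) ). Then for every vector k ∈ ℝ^V with ∑_{c=1}^V k_c = ℓ, it holds that ∑_{c=1}^V Λ_c · 2^{k_c/(r_c q)} ≥ ∑_{c=1}^V Λ_c · 2^{k*_c/(r_c q)}. (Equivalently, the bit allocation k* maximizes the packet decoding probability exp(−(dᵅ/Γ)·∑_c Λ_c(2^{k_c/(r_c q)}−1)) over all allocations of ℓ bits, which is Lemma 1 of the paper.) -/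
/-!
The cost `∑ c, Λ c * 2 ^ (k c / (r c * q))` is a sum of convex functions of the `k c`, and
`kstar` is the allocation at which all their derivatives `(log 2 / q) * 2 ^ C` coincide: writing
`u c = logb 2 (r c / Λ c)`, one has `kstar c = r c * q * (u c + C)` for a constant `C`, so
`Λ c * 2 ^ (kstar c / (r c * q)) = r c * 2 ^ C`. Summing the tangent-line bounds at `kstar`, the
linear terms cancel because `∑ c, k c = ∑ c, kstar c = ℓ`.
-/

open Finset Real

theorem one_add_log_mul_le_rpow {b : ℝ} (hb : 0 < b) (x : ℝ) : 1 + log b * x ≤ b ^ x := by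
  rw [rpow_def_of_pos hb]
  linarith [add_one_le_exp (log b * x)]

theorem sum_mul_rpow_div_le_of_marginal_eq {ι : Type*} (s : Finset ι) {b μ : ℝ} (hb : 0 < b)
    {a w x y : ι → ℝ} (ha : ∀ i ∈ s, 0 ≤ a i) (hw : ∀ i ∈ s, w i ≠ 0)
    (hy : ∀ i ∈ s, a i * b ^ (y i / w i) = μ * w i) (hxy : ∑ i ∈ s, x i = ∑ i ∈ s, y i) :
    ∑ i ∈ s, a i * b ^ (y i / w i) ≤ ∑ i ∈ s, a i * b ^ (x i / w i) := by
  have tangent : ∀ i ∈ s,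
      a i * b ^ (y i / w i) + μ * log b * (x i - y i) ≤ a i * b ^ (x i / w i) := by
    intro i hi
    have hsplit : b ^ (x i / w i) = b ^ (y i / w i) * b ^ ((x i - y i) / w i) := by
      rw [← rpow_add hb]; congr 1; ring
    calc a i * b ^ (y i / w i) + μ * log b * (x i - y i)
        = a i * b ^ (y i / w i) * (1 + log b * ((x i - y i) / w i)) := by
          rw [mul_add, mul_one, hy i hi]; field_simp [hw i hi]
      _ ≤ a i * b ^ (y i / w i) * b ^ ((x i - y i) / w i) :=
          mul_le_mul_of_nonneg_left (one_add_log_mul_le_rpow hb _)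
            (mul_nonneg (ha i hi) (rpow_nonneg hb.le _))
      _ = a i * b ^ (x i / w i) := by rw [hsplit, mul_assoc]
  calc ∑ i ∈ s, a i * b ^ (y i / w i)
      = ∑ i ∈ s, (a i * b ^ (y i / w i) + μ * log b * (x i - y i)) := by
        rw [sum_add_distrib, ← mul_sum, sum_sub_distrib, hxy, sub_self, mul_zero, add_zero]
    _ ≤ ∑ i ∈ s, a i * b ^ (x i / w i) := sum_le_sum tangent

theorem sum_mul_sum_mul_sub_eq_zero {ι : Type*} (s : Finset ι) (r u : ι → ℝ) :
    ∑ i ∈ s, r i * ∑ j ∈ s, r j * (u i - u j) = 0 := by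
  simp only [mul_sub, sum_sub_distrib, mul_sum]
  rw [sub_eq_zero, sum_comm]
  exact sum_congr rfl fun i _ => sum_congr rfl fun j _ => by ring

/-- Lemma 1 of the paper: the closed-form allocation `kstar` minimizes
`∑ c, Λ c * 2 ^ (k c / (r c * q))` among all allocations of `ℓ` bits,
i.e. maximizes the packet decoding probability. -/
theorem stmt0 (V : ℕ) (hV : 1 ≤ V) (r Λ : Fin V → ℝ)
    (hr : ∀ c, 0 < r c) (hΛ : ∀ c, 0 < Λ c)
    (q ℓ : ℝ) (hq : 0 < q)
    (R : ℝ) (hR : R = ∑ c, r c)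
    (kstar : Fin V → ℝ)
    (hkstar : ∀ c, kstar c =
      ℓ * r c / R + q * r c / R *
        ∑ j, r j * Real.logb 2 (r c * Λ j / (r j * Λ c)))
    (k : Fin V → ℝ) (hk : ∑ c, k c = ℓ) :
    ∑ c, Λ c * (2 : ℝ) ^ (k c / (r c * q)) ≥
      ∑ c, Λ c * (2 : ℝ) ^ (kstar c / (r c * q)) := by
  have hne : Nonempty (Fin V) := Fin.pos_iff_nonempty.mp hV
  have hR0 : R ≠ 0 := hR ▸ (sum_pos (fun c _ => hr c) univ_nonempty).ne'
  set u : Fin V → ℝ := fun c => logb 2 (r c / Λ c)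
  have hkstar_u : ∀ c, kstar c = ℓ * r c / R + q * r c / R * ∑ j, r j * (u c - u j) := by
    intro c
    rw [hkstar c]
    congr 3; ext j
    rw [← logb_div (div_pos (hr c) (hΛ c)).ne' (div_pos (hr j) (hΛ j)).ne']
    congr 2; field_simp [(hr j).ne', (hΛ c).ne']
  have hsum : ∑ c, kstar c = ℓ := by
    simp only [hkstar_u, sum_add_distrib, ← sum_div, ← mul_sum, ← hR, mul_div_right_comm q,
      mul_assoc (q / R), sum_mul_sum_mul_sub_eq_zero, mul_zero, add_zero]
    exact mul_div_cancel_right₀ ℓ hR0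
  set C := ℓ / (R * q) - (∑ j, r j * u j) / R with hC
  have hexp : ∀ c, kstar c / (r c * q) = u c + C := by
    intro c
    rw [hkstar_u c]
    simp only [mul_sub, sum_sub_distrib, ← sum_mul, ← hR]
    rw [hC]
    field_simp [(hr c).ne', hq.ne']
    ring
  have hbal : ∀ c ∈ univ, Λ c * 2 ^ (kstar c / (r c * q)) = 2 ^ C / q * (r c * q) := by
    intro c _
    rw [hexp, rpow_add two_pos, rpow_logb two_pos (by norm_num) (div_pos (hr c) (hΛ c))]
    field_simp [(hΛ c).ne', hq.ne']
  exact sum_mul_rpow_div_le_of_marginal_eq univ two_pos (fun c _ => (hΛ c).le)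
    (fun c _ => (mul_pos (hr c) hq).ne') hbal (hk.trans hsum.symm)
end

section
/- Let V ≥ 2 be an integer, r_c > 0 and Λ_c > 0 real numbers for c ∈ {1,…,V}, R = ∑_{c=1}^V r_c, q > 0 and ℓ real. For a subset S ⊆ {1,…,V} define the optimal allocation on S by k_c(S) = (ℓ r_c)/R_S + (q r_c / R_S) · ∑_{j∈S} r_j · log₂( (r_c Λ_j)/(r_j Λ_c) ), where R_S = ∑_{j∈S} r_j. Fix a channel c₀ ∈ {1,…,V} with R − r_{c₀} > 0. Then for every j ≠ c₀, the optimal allocation after removing channel c₀ satisfies k_j({1,…,V}∖{c₀}) = k_j({1,…,V}) + ( r_j / (R − r_{c₀}) ) · k_{c₀}({1,…,V}). (This is Lemma 2 of the paper: when a channel with a negative optimal bit count is removed, its bits are redistributed among the remaining channels proportionally to their numbers of resource units.) -/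
open Finset

/-- Lemma 2 of the paper: when a channel `c₀` is removed, the bits optimally
assigned to it in the all-channels allocation are redistributed among the
remaining channels proportionally to their numbers of resource units. -/
theorem stmt3 (V : ℕ) (hV : 2 ≤ V) (r Λ : Fin V → ℝ)
    (hr : ∀ c, 0 < r c) (hΛ : ∀ c, 0 < Λ c)
    (q ℓ : ℝ) (hq : 0 < q)
    (R : ℝ) (hR : R = ∑ c, r c)
    (k : Finset (Fin V) → Fin V → ℝ)
    (hk : ∀ (S : Finset (Fin V)) (c : Fin V),
      k S c = ℓ * r c / (∑ j ∈ S, r j) + q * r c / (∑ j ∈ S, r j) *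
        ∑ j ∈ S, r j * Real.logb 2 (r c * Λ j / (r j * Λ c)))
    (c₀ : Fin V) (hc₀ : 0 < R - r c₀) :
    ∀ j, j ≠ c₀ →
      k (Finset.univ \ {c₀}) j = k Finset.univ j + r j / (R - r c₀) * k Finset.univ c₀ := by
  intro j hj
  have hR0 : (0:ℝ) < R := by
    have := hr c₀; linarith
  have hsdiff : (Finset.univ \ {c₀} : Finset (Fin V)) = Finset.univ.erase c₀ := by
    rw [Finset.erase_eq]
  have hsumT : ∑ i ∈ Finset.univ \ {c₀}, r i = R - r c₀ := by
    rw [hsdiff, Finset.sum_erase_eq_sub (Finset.mem_univ c₀), hR]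
  set L := Real.logb 2 (r j * Λ c₀ / (r c₀ * Λ j)) with hL
  have hlog : ∀ i, Real.logb 2 (r j * Λ i / (r i * Λ j))
      = Real.logb 2 (r c₀ * Λ i / (r i * Λ c₀)) + L := by
    intro i
    have h1 : r c₀ * Λ i / (r i * Λ c₀) ≠ 0 := by
      have := hr c₀; have := hΛ i; have := hr i; have := hΛ c₀; positivity
    have h2 : r j * Λ c₀ / (r c₀ * Λ j) ≠ 0 := by
      have := hr j; have := hΛ c₀; have := hr c₀; have := hΛ j; positivity
    have heq : r j * Λ i / (r i * Λ j)
        = (r c₀ * Λ i / (r i * Λ c₀)) * (r j * Λ c₀ / (r c₀ * Λ j)) := by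
      have := (hr c₀).ne'; have := (hΛ c₀).ne'; have := (hr i).ne'
      have := (hΛ i).ne'; have := (hr j).ne'; have := (hΛ j).ne'
      field_simp
    rw [heq, Real.logb_mul h1 h2]
  have hAj : (∑ i, r i * Real.logb 2 (r j * Λ i / (r i * Λ j)))
      = (∑ i, r i * Real.logb 2 (r c₀ * Λ i / (r i * Λ c₀))) + R * L := by
    simp only [hlog, mul_add]
    rw [Finset.sum_add_distrib, ← Finset.sum_mul, ← hR]
  have hAj' : (∑ i ∈ Finset.univ \ {c₀}, r i * Real.logb 2 (r j * Λ i / (r i * Λ j)))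
      = (∑ i, r i * Real.logb 2 (r j * Λ i / (r i * Λ j))) - r c₀ * L := by
    rw [hsdiff, Finset.sum_erase_eq_sub (Finset.mem_univ c₀), hL]
  rw [hk, hk, hk, hsumT, ← hR, hAj', hAj]
  set Ac := ∑ i, r i * Real.logb 2 (r c₀ * Λ i / (r i * Λ c₀)) with hAc
  have hT : R - r c₀ ≠ 0 := ne_of_gt hc₀
  have hRne : R ≠ 0 := ne_of_gt hR0
  field_simp
  ring
end

section
/- Let V ≥ 2 be an integer, r_c > 0 and Λ_c > 0 real numbers for c ∈ {1,…,V}, R = ∑_{c=1}^V r_c, q > 0 and ℓ real. Suppose the real numbers k_1,…,k_{V−1} satisfy, for every i ∈ {1,…,V−1}, the system of equations k_i = ℓ·(r_i/r_V) + q r_i · log₂( (r_i Λ_V)/(r_V Λ_i) ) − (r_i/r_V) · ∑_{j=1}^{V−1} k_j. Then ∑_{i=1}^{V−1} k_i = ℓ·(1 − r_V/R) + (q r_V / R) · ∑_{i=1}^{V−1} r_i · log₂( (r_i Λ_V)/(r_V Λ_i) ). -/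
open Finset

/-- Key intermediate step in the proof of Lemma 1: summing the stationarity
equations over the first `V - 1` channels (here: all channels other than a
distinguished channel `v`) yields the stated closed form for `∑ i, k i`. -/
theorem stmt4 (V : ℕ) (hV : 2 ≤ V) (r Λ : Fin V → ℝ)
    (hr : ∀ c, 0 < r c) (hΛ : ∀ c, 0 < Λ c)
    (q ℓ : ℝ) (hq : 0 < q)
    (R : ℝ) (hR : R = ∑ c, r c)
    (v : Fin V) (k : Fin V → ℝ)
    (hk : ∀ i, i ≠ v →
      k i = ℓ * (r i / r v) + q * r i * Real.logb 2 (r i * Λ v / (r v * Λ i))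
        - (r i / r v) * ∑ j ∈ Finset.univ \ {v}, k j) :
    ∑ i ∈ Finset.univ \ {v}, k i =
      ℓ * (1 - r v / R) + q * r v / R *
        ∑ i ∈ Finset.univ \ {v}, r i * Real.logb 2 (r i * Λ v / (r v * Λ i)) := by
  set S := ∑ i ∈ Finset.univ \ {v}, k i with hSdef
  set T := ∑ i ∈ Finset.univ \ {v}, r i * Real.logb 2 (r i * Λ v / (r v * Λ i)) with hT
  set A := ∑ i ∈ Finset.univ \ {v}, r i with hAdef
  have hrv : (0:ℝ) < r v := hr v
  have hA : A = R - r v := by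
    have : R = A + r v := by
      rw [hR, hAdef, Finset.sum_sdiff_eq_sub (Finset.subset_univ {v}),
        Finset.sum_singleton]
      ring
    linarith
  have hRpos : 0 < R := by
    have hApos : 0 ≤ A := Finset.sum_nonneg fun i _ => (hr i).le
    linarith
  have h1 : S = ℓ * (A / r v) + q * T - (A / r v) * S := by
    calc S = ∑ i ∈ Finset.univ \ {v},
        (ℓ * (r i / r v) + q * r i * Real.logb 2 (r i * Λ v / (r v * Λ i))
          - (r i / r v) * S) := by
          refine Finset.sum_congr rfl fun i hi => ?_
          exact hk i (by simpa using (Finset.mem_sdiff.mp hi).2)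
      _ = ℓ * (A / r v) + q * T - (A / r v) * S := by
          have hqT : ∑ i ∈ Finset.univ \ {v},
              q * r i * Real.logb 2 (r i * Λ v / (r v * Λ i)) = q * T := by
            rw [hT, Finset.mul_sum]
            exact Finset.sum_congr rfl fun i _ => by ring
          have hl : ∑ i ∈ Finset.univ \ {v}, ℓ * (r i / r v) = ℓ * (A / r v) := by
            rw [hAdef, div_eq_mul_inv, Finset.sum_mul, Finset.mul_sum]
            exact Finset.sum_congr rfl fun i _ => by ring
          have hs : ∑ i ∈ Finset.univ \ {v}, (r i / r v) * S = (A / r v) * S := by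
            rw [hAdef, div_eq_mul_inv, Finset.sum_mul, Finset.sum_mul]
            exact Finset.sum_congr rfl fun i _ => by ring
          rw [Finset.sum_sub_distrib, Finset.sum_add_distrib, hqT, hl, hs]
  rw [hA] at h1
  field_simp at h1 ⊢
  nlinarith [h1, mul_pos hrv hRpos]
end

section
/- Let λ > 0, μ > 0, θ_i > 0, θ_j > 0 be real numbers with θ_i·θ_j < 1, and set s = (θ_i + 1) / (1/θ_j − θ_i). Define the region A ⊆ ℝ² as the set of pairs (x,y) with x ≥ 0, y ≥ 0 such that either [ x/λ ≥ θ_i and (y/μ)/(1 + x/λ) ≥ θ_j ] or [ (x/λ)/(1 + y/μ) ≥ θ_i and (y/μ)/(1 + x/λ) < θ_j ]. Then ∫∫_A e^{−x−y} dx dy = e^{−λθ_i − μθ_j(1+θ_i)} + ( μ e^{−λθ_i} / (λθ_i + μ) ) · ( 1 − e^{−s(λθ_i + μ)} ) + ( μ / (λ/θ_j + μ) ) · ( e^{−s(λ/θ_j + μ) + λ} − e^{−λθ_i − θ_j μ (1+θ_i)} ). -/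
/-! Given `x, y ≥ 0`, the region is the disjoint union of the part where `D_j` is decoded,
`{x ≥ λθi, y ≥ μθj(1 + x/λ)}`, and the part where it is not,
`{x ≥ λθi(1 + y/μ), x > λ(y/(μθj) - 1)}`.
Because `θi θj < 1` the two boundary lines of the second part cross at `y = μ s`, below which the
first boundary is the binding one and above which the second is. Each of the three resulting pieces
lies over an interval with one boundary curve, so Fubini reduces it to a one-dimensional integral of
the exponential of an affine function. -/

open MeasureTheory Set Real

theorem integral_Ioi_exp_sub_mul {k : ℝ} (hk : 0 < k) (d c : ℝ) :
    ∫ x in Ioi c, exp (d - k * x) = exp (d - k * c) / k := by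
  simp_rw [sub_eq_add_neg, exp_add, ← neg_mul]
  rw [integral_const_mul, integral_exp_mul_Ioi (neg_lt_zero.2 hk)]
  field_simp

theorem integral_Ici_exp_sub_mul {k : ℝ} (hk : 0 < k) (d c : ℝ) :
    ∫ x in Ici c, exp (d - k * x) = exp (d - k * c) / k := by
  rw [integral_Ici_eq_integral_Ioi, integral_Ioi_exp_sub_mul hk]

theorem integral_Ici_exp_sub (d c : ℝ) : ∫ x in Ici c, exp (d - x) = exp (d - c) := by
  simpa using integral_Ici_exp_sub_mul one_pos d c

theorem integral_Ioi_exp_sub (d c : ℝ) : ∫ x in Ioi c, exp (d - x) = exp (d - c) := by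
  simpa using integral_Ioi_exp_sub_mul one_pos d c

theorem integral_Ico_exp_sub_mul {k : ℝ} (hk : k ≠ 0) (d : ℝ) {a b : ℝ} (hab : a ≤ b) :
    ∫ x in Ico a b, exp (d - k * x) = (exp (d - k * a) - exp (d - k * b)) / k := by
  rw [integral_Ico_eq_integral_Ioo, ← integral_Ioc_eq_integral_Ioo,
    ← intervalIntegral.integral_of_le hab, intervalIntegral.integral_comp_sub_mul _ hk,
    integral_exp, smul_eq_mul]
  field_simp

theorem integrableOn_exp_neg_sub_Ici_prod_Ici (a b : ℝ) :
    IntegrableOn (fun p : ℝ × ℝ => exp (-p.1 - p.2)) (Ici a ×ˢ Ici b) := by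
  have h : ∀ c : ℝ, IntegrableOn (fun x : ℝ => exp (-x)) (Ici c) := fun c =>
    (integrableOn_Ici_iff_integrableOn_Ioi).2 (integrableOn_exp_neg_Ioi c)
  simp_rw [sub_eq_add_neg, exp_add]
  rw [IntegrableOn, Measure.volume_eq_prod, ← Measure.prod_restrict]
  exact (h a).mul_prod (h b)

theorem le_div_div_one_add_div_iff {a b c d θ : ℝ} (hb : 0 < b) (hd : 0 < d) (hc : 0 ≤ c) :
    θ ≤ a / b / (1 + c / d) ↔ b * θ * (1 + c / d) ≤ a := by
  rw [le_div_iff₀ (by positivity), le_div_iff₀ hb, mul_comm b, mul_right_comm]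

section Sections

variable {α β : Type*} [MeasurableSpace α] [MeasurableSpace β] {μ : Measure α} {ν : Measure β}
  [SFinite μ] [SFinite ν] {f : α × β → ℝ}

theorem setIntegral_setOf_fst_mem_snd_mem {S : Set α} {I : α → Set β} (hS : MeasurableSet S)
    (hT : MeasurableSet {p : α × β | p.1 ∈ S ∧ p.2 ∈ I p.1})
    (hf : IntegrableOn f {p : α × β | p.1 ∈ S ∧ p.2 ∈ I p.1} (μ.prod ν)) :
    ∫ p in {p : α × β | p.1 ∈ S ∧ p.2 ∈ I p.1}, f p ∂μ.prod ν =
      ∫ x in S, ∫ y in I x, f (x, y) ∂ν ∂μ := by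
  rw [← integral_indicator hT, integral_prod _ ((integrable_indicator_iff hT).2 hf),
    ← integral_indicator hS]
  congr 1 with x
  by_cases hx : x ∈ S
  · have hIx : MeasurableSet (I x) := by simpa [hx] using measurable_prodMk_left (x := x) hT
    rw [indicator_of_mem hx, ← integral_indicator hIx]
    congr 1 with y
    by_cases hy : y ∈ I x <;> simp [indicator, hx, hy]
  · simp [indicator, hx]

theorem setIntegral_setOf_snd_mem_fst_mem {S : Set β} {I : β → Set α} (hS : MeasurableSet S)
    (hT : MeasurableSet {p : α × β | p.2 ∈ S ∧ p.1 ∈ I p.2})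
    (hf : IntegrableOn f {p : α × β | p.2 ∈ S ∧ p.1 ∈ I p.2} (μ.prod ν)) :
    ∫ p in {p : α × β | p.2 ∈ S ∧ p.1 ∈ I p.2}, f p ∂μ.prod ν =
      ∫ y in S, ∫ x in I y, f (x, y) ∂μ ∂ν := by
  rw [← integral_indicator hT, integral_prod_symm _ ((integrable_indicator_iff hT).2 hf),
    ← integral_indicator hS]
  congr 1 with y
  by_cases hy : y ∈ S
  · have hIy : MeasurableSet (I y) := by simpa [hy] using measurable_prodMk_right (y := y) hT
    rw [indicator_of_mem hy, ← integral_indicator hIy]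
    congr 1 with x
    by_cases hx : x ∈ I y <;> simp [indicator, hx, hy]
  · simp [indicator, hy]

end Sections

section DecodingRegion

variable {lam mu θi θj s : ℝ}

theorem decodingRegion_eq_union (hlam : 0 < lam) (hmu : 0 < mu) :
    {p : ℝ × ℝ | 0 ≤ p.1 ∧ 0 ≤ p.2 ∧
      ((p.1 / lam ≥ θi ∧ (p.2 / mu) / (1 + p.1 / lam) ≥ θj) ∨
       ((p.1 / lam) / (1 + p.2 / mu) ≥ θi ∧ (p.2 / mu) / (1 + p.1 / lam) < θj))} =
    {p : ℝ × ℝ | 0 ≤ p.1 ∧ 0 ≤ p.2 ∧ lam * θi ≤ p.1 ∧ mu * θj * (1 + p.1 / lam) ≤ p.2} ∪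
      {p : ℝ × ℝ | 0 ≤ p.1 ∧ 0 ≤ p.2 ∧
        lam * θi * (1 + p.2 / mu) ≤ p.1 ∧ ¬mu * θj * (1 + p.1 / lam) ≤ p.2} := by
  ext ⟨x, y⟩
  simp only [mem_ofPred_eq, mem_union, ge_iff_le, ← not_le, ← and_or_left]
  refine and_congr_right fun hx => and_congr_right fun hy => ?_
  rw [le_div_iff₀ hlam, mul_comm θi, le_div_div_one_add_div_iff hmu hlam hx,
    le_div_div_one_add_div_iff hlam hmu hy]

theorem mul_one_add_div_le_iff (hlam : 0 < lam) (hmu : 0 < mu) (hθj : 0 < θj) (x y : ℝ) :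
    mu * θj * (1 + x / lam) ≤ y ↔ x ≤ lam * (y / (mu * θj) - 1) := by
  rw [← le_div_iff₀' (by positivity), ← le_sub_iff_add_le', div_le_iff₀' hlam]

theorem interferenceBoundaries_sub_eq (hmu : mu ≠ 0) (hs : s * (1 / θj - θi) = θi + 1) (y : ℝ) :
    lam * (y / (mu * θj) - 1) - lam * θi * (1 + y / mu) =
      lam / mu * (1 / θj - θi) * (y - mu * s) := by
  linear_combination lam * hs + lam * s * (1 / θj - θi) * mul_inv_cancel₀ hmu

theorem integral_exp_neg_sub_sicRegion (hlam : 0 < lam) (hmu : 0 < mu) (hθi : 0 < θi)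
    (hθj : 0 < θj) :
    ∫ p in {p : ℝ × ℝ | 0 ≤ p.1 ∧ 0 ≤ p.2 ∧ lam * θi ≤ p.1 ∧ mu * θj * (1 + p.1 / lam) ≤ p.2},
      exp (-p.1 - p.2) = lam / (lam + mu * θj) * exp (-(lam * θi) - mu * θj * (1 + θi)) := by
  have hint := (integrableOn_exp_neg_sub_Ici_prod_Ici 0 0).mono_set
    (s := {p : ℝ × ℝ | 0 ≤ p.1 ∧ 0 ≤ p.2 ∧ lam * θi ≤ p.1 ∧ mu * θj * (1 + p.1 / lam) ≤ p.2})
    fun p hp => ⟨hp.1, hp.2.1⟩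
  have hregion :
      {p : ℝ × ℝ | 0 ≤ p.1 ∧ 0 ≤ p.2 ∧ lam * θi ≤ p.1 ∧ mu * θj * (1 + p.1 / lam) ≤ p.2} =
        {p : ℝ × ℝ | p.1 ∈ Ici (lam * θi) ∧ p.2 ∈ Ici (mu * θj * (1 + p.1 / lam))} := by
    ext ⟨x, y⟩
    simp only [mem_ofPred_eq, mem_Ici]
    refine ⟨fun h => h.2.2, fun ⟨hx, hy⟩ => ?_⟩
    have hx0 : 0 ≤ x := le_trans (by positivity) hx
    exact ⟨hx0, le_trans (by positivity) hy, hx, hy⟩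
  rw [hregion] at hint ⊢
  rw [Measure.volume_eq_prod, setIntegral_setOf_fst_mem_snd_mem
    (I := fun x => Ici (mu * θj * (1 + x / lam))) measurableSet_Ici (by measurability) hint]
  have hexp (x : ℝ) :
      -x - mu * θj * (1 + x / lam) = -(mu * θj) - (1 + mu * θj / lam) * x := by
    field_simp; ring
  dsimp only
  simp_rw [integral_Ici_exp_sub, hexp]
  rw [integral_Ici_exp_sub_mul (by positivity)]
  field_simp
  congr 1
  ring

theorem integral_exp_neg_sub_interferenceRegion_lt (hlam : 0 < lam) (hmu : 0 < mu) (hθi : 0 < θi)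
    (hs : 0 ≤ s) :
    ∫ p in {p : ℝ × ℝ | p.2 ∈ Ico 0 (mu * s) ∧ p.1 ∈ Ici (lam * θi * (1 + p.2 / mu))},
      exp (-p.1 - p.2) =
      mu * exp (-(lam * θi)) / (lam * θi + mu) * (1 - exp (-(s * (lam * θi + mu)))) := by
  have hsub : {p : ℝ × ℝ | p.2 ∈ Ico 0 (mu * s) ∧ p.1 ∈ Ici (lam * θi * (1 + p.2 / mu))} ⊆
      Ici 0 ×ˢ Ici 0 := by
    rintro ⟨x, y⟩ ⟨⟨hy, -⟩, hx⟩
    simp only [mem_Ici] at hx hy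
    exact ⟨le_trans (by positivity) hx, hy⟩
  rw [Measure.volume_eq_prod, setIntegral_setOf_snd_mem_fst_mem
    (I := fun y => Ici (lam * θi * (1 + y / mu))) measurableSet_Ico (by measurability)
    ((integrableOn_exp_neg_sub_Ici_prod_Ici 0 0).mono_set hsub)]
  have hexp (y : ℝ) :
      -y - lam * θi * (1 + y / mu) = -(lam * θi) - (lam * θi + mu) / mu * y := by
    field_simp; ring
  dsimp only
  simp_rw [neg_sub_comm _ (_ : ℝ), integral_Ici_exp_sub, hexp]
  rw [integral_Ico_exp_sub_mul (by positivity) _ (by positivity), mul_zero, sub_zero,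
    show (lam * θi + mu) / mu * (mu * s) = s * (lam * θi + mu) by field_simp,
    sub_eq_add_neg _ (s * _), exp_add]
  field_simp

theorem integral_exp_neg_sub_interferenceRegion_ge (hlam : 0 < lam) (hmu : 0 < mu) (hθj : 0 < θj)
    (hs : 0 ≤ s) :
    ∫ p in {p : ℝ × ℝ | p.2 ∈ Ici (mu * s) ∧ p.1 ∈ Ioi (lam * (p.2 / (mu * θj) - 1))},
      exp (-p.1 - p.2) = mu / (lam / θj + mu) * exp (-(s * (lam / θj + mu)) + lam) := by
  have hsub : {p : ℝ × ℝ | p.2 ∈ Ici (mu * s) ∧ p.1 ∈ Ioi (lam * (p.2 / (mu * θj) - 1))} ⊆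
      Ici (-lam) ×ˢ Ici 0 := by
    rintro ⟨x, y⟩ ⟨hy, hx⟩
    simp only [mem_Ici, mem_Ioi] at hx hy
    have hy0 : 0 ≤ y := le_trans (by positivity) hy
    have hg : -lam ≤ lam * (y / (mu * θj) - 1) := by
      rw [mul_sub_one]
      linarith [show 0 ≤ lam * (y / (mu * θj)) by positivity]
    exact ⟨hg.trans hx.le, hy0⟩
  rw [Measure.volume_eq_prod, setIntegral_setOf_snd_mem_fst_mem
    (I := fun y => Ioi (lam * (y / (mu * θj) - 1))) measurableSet_Ici (by measurability)
    ((integrableOn_exp_neg_sub_Ici_prod_Ici _ _).mono_set hsub)]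
  have hexp (y : ℝ) :
      -y - lam * (y / (mu * θj) - 1) = lam - (1 + lam / (mu * θj)) * y := by
    field_simp; ring
  dsimp only
  simp_rw [neg_sub_comm _ (_ : ℝ), integral_Ioi_exp_sub, hexp]
  rw [integral_Ici_exp_sub_mul (by positivity),
    show lam - (1 + lam / (mu * θj)) * (mu * s) = -(s * (lam / θj + mu)) + lam by field_simp; ring]
  field_simp
  ring

theorem interferenceRegion_eq_union (hlam : 0 < lam) (hmu : 0 < mu) (hθi : 0 < θi)
    (hθj : 0 < θj) (hD : 0 < 1 / θj - θi) (hs : s * (1 / θj - θi) = θi + 1) :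
    {p : ℝ × ℝ | 0 ≤ p.1 ∧ 0 ≤ p.2 ∧
        lam * θi * (1 + p.2 / mu) ≤ p.1 ∧ ¬mu * θj * (1 + p.1 / lam) ≤ p.2} =
      {p : ℝ × ℝ | p.2 ∈ Ico 0 (mu * s) ∧ p.1 ∈ Ici (lam * θi * (1 + p.2 / mu))} ∪
        {p : ℝ × ℝ | p.2 ∈ Ici (mu * s) ∧ p.1 ∈ Ioi (lam * (p.2 / (mu * θj) - 1))} := by
  have hgh := interferenceBoundaries_sub_eq (lam := lam) hmu.ne' hs
  have hc : 0 < lam / mu * (1 / θj - θi) := by positivity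
  have hs0 : 0 < s := by nlinarith
  have hj (x y : ℝ) := (mul_one_add_div_le_iff hlam hmu hθj x y).not.trans not_le
  ext ⟨x, y⟩
  simp only [mem_ofPred_eq, mem_union, mem_Ici, mem_Ico, mem_Ioi, hj]
  constructor
  · rintro ⟨-, hy, hxh, hxg⟩
    by_cases hys : y < mu * s
    · exact Or.inl ⟨⟨hy, hys⟩, hxh⟩
    · exact Or.inr ⟨not_lt.1 hys, hxg⟩
  · rintro (⟨⟨hy, hys⟩, hxh⟩ | ⟨hys, hxg⟩)
    · have hgh_neg := mul_neg_of_pos_of_neg hc (sub_neg.2 hys)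
      exact ⟨le_trans (by positivity) hxh, hy, hxh, by linarith [hgh y]⟩
    · have hy : 0 ≤ y := le_trans (by positivity) hys
      have hxh : lam * θi * (1 + y / mu) ≤ x := by
        linarith [hgh y, mul_nonneg hc.le (sub_nonneg.2 hys)]
      exact ⟨le_trans (by positivity) hxh, hy, hxh, hxg⟩

theorem integral_exp_neg_sub_interferenceRegion (hlam : 0 < lam) (hmu : 0 < mu) (hθi : 0 < θi)
    (hθj : 0 < θj) (hD : 0 < 1 / θj - θi) (hs : s * (1 / θj - θi) = θi + 1) :
    ∫ p in {p : ℝ × ℝ | 0 ≤ p.1 ∧ 0 ≤ p.2 ∧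
        lam * θi * (1 + p.2 / mu) ≤ p.1 ∧ ¬mu * θj * (1 + p.1 / lam) ≤ p.2}, exp (-p.1 - p.2) =
      mu * exp (-(lam * θi)) / (lam * θi + mu) * (1 - exp (-(s * (lam * θi + mu)))) +
        mu / (lam / θj + mu) * exp (-(s * (lam / θj + mu)) + lam) := by
  have hint := (integrableOn_exp_neg_sub_Ici_prod_Ici 0 0).mono_set
    (s := {p : ℝ × ℝ | 0 ≤ p.1 ∧ 0 ≤ p.2 ∧
        lam * θi * (1 + p.2 / mu) ≤ p.1 ∧ ¬mu * θj * (1 + p.1 / lam) ≤ p.2})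
    fun p hp => ⟨hp.1, hp.2.1⟩
  have hs0 : 0 ≤ s := by nlinarith
  rw [interferenceRegion_eq_union hlam hmu hθi hθj hD hs] at hint ⊢
  rw [setIntegral_union (disjoint_left.2 fun p h₁ h₂ => not_lt.2 h₂.1 h₁.1.2) (by measurability)
      hint.left_of_union hint.right_of_union,
    integral_exp_neg_sub_interferenceRegion_lt hlam hmu hθi hs0,
    integral_exp_neg_sub_interferenceRegion_ge hlam hmu hθj hs0]

end DecodingRegion

/-- Closed form of the SIC decoding probability (equation (27) of the paper,
case `θi · θj < 1`): the integral of the joint exponential density over the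
decoding region equals the stated expression. -/
theorem stmt7 (lam mu θi θj : ℝ)
    (hlam : 0 < lam) (hmu : 0 < mu) (hθi : 0 < θi) (hθj : 0 < θj)
    (hprod : θi * θj < 1)
    (s : ℝ) (hs : s = (θi + 1) / (1 / θj - θi))
    (A : Set (ℝ × ℝ))
    (hA : A = {p : ℝ × ℝ | 0 ≤ p.1 ∧ 0 ≤ p.2 ∧
      ((p.1 / lam ≥ θi ∧ (p.2 / mu) / (1 + p.1 / lam) ≥ θj) ∨
       ((p.1 / lam) / (1 + p.2 / mu) ≥ θi ∧ (p.2 / mu) / (1 + p.1 / lam) < θj))}) :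
    ∫ p in A, Real.exp (-p.1 - p.2) =
      Real.exp (-(lam * θi) - mu * θj * (1 + θi)) +
      mu * Real.exp (-(lam * θi)) / (lam * θi + mu) *
        (1 - Real.exp (-(s * (lam * θi + mu)))) +
      mu / (lam / θj + mu) *
        (Real.exp (-(s * (lam / θj + mu)) + lam) -
          Real.exp (-(lam * θi) - θj * mu * (1 + θi))) := by
  have hD : 0 < 1 / θj - θi := by rw [sub_pos, lt_div_iff₀ hθj]; linarith
  have hsD : s * (1 / θj - θi) = θi + 1 := by rw [hs, div_mul_cancel₀ _ hD.ne']
  have hquad := integrableOn_exp_neg_sub_Ici_prod_Ici 0 0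
  rw [hA, decodingRegion_eq_union hlam hmu,
    setIntegral_union (disjoint_left.2 fun p h₁ h₂ => h₂.2.2.2 h₁.2.2.2) (by measurability)
      (hquad.mono_set fun p hp => ⟨hp.1, hp.2.1⟩) (hquad.mono_set fun p hp => ⟨hp.1, hp.2.1⟩),
    integral_exp_neg_sub_sicRegion hlam hmu hθi hθj,
    integral_exp_neg_sub_interferenceRegion hlam hmu hθi hθj hD hsD, mul_comm θj mu]
  field_simp
  ring
end

section
/- Let λ > 0, μ > 0, θ_i > 0, θ_j > 0 be real numbers with θ_i·θ_j > 1. Define the region A ⊆ ℝ² as the set of pairs (x,y) with x ≥ 0, y ≥ 0 such that either [ x/λ ≥ θ_i and (y/μ)/(1 + x/λ) ≥ θ_j ] or [ (x/λ)/(1 + y/μ) ≥ θ_i and (y/μ)/(1 + x/λ) < θ_j ]. Then ∫∫_A e^{−x−y} dx dy = e^{−λθ_i} · ( e^{−μθ_j(1+θ_i)} · ( 1 − μ/(λ/θ_j + μ) ) + μ/(λθ_i + μ) ). -/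
open MeasureTheory Set Real

lemma expInt (c : ℝ) {k : ℝ} (hk : 0 < k) :
    ∫ x in Ioi c, Real.exp (-(k * x)) = Real.exp (-(k * c)) / k := by
  have h := integral_comp_mul_left_Ioi (fun x => Real.exp (-x)) c hk
  simp only [smul_eq_mul] at h
  rw [h, integral_exp_neg_Ioi]
  field_simp

lemma integOn (c d : ℝ) :
    IntegrableOn (fun p : ℝ × ℝ => Real.exp (-p.1 - p.2)) (Ici c ×ˢ Ici d) := by
  have h1 : ∀ e : ℝ, IntegrableOn (fun x => Real.exp (-x)) (Ici e) := by
    intro e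
    rw [integrableOn_Ici_iff_integrableOn_Ioi]
    simpa using exp_neg_integrableOn_Ioi e one_pos
  have := (h1 c).mul_prod (h1 d)
  rw [Measure.prod_restrict] at this
  rw [IntegrableOn, Measure.volume_eq_prod]
  refine (this.congr ?_)
  filter_upwards with p
  rw [← Real.exp_add]; ring_nf

lemma measS (a b c : ℝ) :
    MeasurableSet {p : ℝ × ℝ | c ≤ p.1 ∧ a + b * p.1 ≤ p.2} := by
  apply MeasurableSet.inter
  · exact measurableSet_le measurable_const measurable_fst
  · exact measurableSet_le (measurable_const.add (measurable_fst.const_mul b)) measurable_snd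

lemma subS (a b c : ℝ) (hb : 0 ≤ b) :
    {p : ℝ × ℝ | c ≤ p.1 ∧ a + b * p.1 ≤ p.2} ⊆ Ici c ×ˢ Ici (a + b * c) := by
  rintro p ⟨h1, h2⟩
  refine ⟨h1, ?_⟩
  have : b * c ≤ b * p.1 := mul_le_mul_of_nonneg_left h1 hb
  simp only [mem_Ici]; linarith

lemma key (a b c : ℝ) (hb : 0 ≤ b) :
    ∫ p in {p : ℝ × ℝ | c ≤ p.1 ∧ a + b * p.1 ≤ p.2}, Real.exp (-p.1 - p.2)
      = Real.exp (-(a + (1 + b) * c)) / (1 + b) := by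
  set S := {p : ℝ × ℝ | c ≤ p.1 ∧ a + b * p.1 ≤ p.2} with hSdef
  have hS : MeasurableSet S := measS a b c
  have hsub : S ⊆ Ici c ×ˢ Ici (a + b * c) := subS a b c hb
  have hIR : IntegrableOn (fun p : ℝ × ℝ => Real.exp (-p.1 - p.2)) (Ici c ×ˢ Ici (a + b * c)) :=
    integOn c (a + b * c)
  have hInd : IntegrableOn (S.indicator fun p : ℝ × ℝ => Real.exp (-p.1 - p.2))
      (Ici c ×ˢ Ici (a + b * c)) := hIR.indicator hS
  have step1 : ∫ p in S, Real.exp (-p.1 - p.2)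
      = ∫ p in Ici c ×ˢ Ici (a + b * c),
          (S.indicator fun p : ℝ × ℝ => Real.exp (-p.1 - p.2)) p := by
    rw [setIntegral_indicator hS, Set.inter_eq_self_of_subset_right hsub]
  rw [step1]
  rw [Measure.volume_eq_prod] at hInd ⊢
  rw [setIntegral_prod _ hInd]
  have step2 : ∫ x in Ici c, ∫ y in Ici (a + b * c),
      (S.indicator fun p : ℝ × ℝ => Real.exp (-p.1 - p.2)) (x, y)
      = ∫ x in Ici c, Real.exp (-x) * Real.exp (-(a + b * x)) := by
    apply setIntegral_congr_fun measurableSet_Ici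
    intro x hx
    have hxc : c ≤ x := hx
    show (∫ y in Ici (a + b * c),
      (S.indicator fun p : ℝ × ℝ => Real.exp (-p.1 - p.2)) (x, y)) = _
    have hbb : a + b * c ≤ a + b * x := by nlinarith [mul_le_mul_of_nonneg_left hxc hb]
    have e1 : (fun y => (S.indicator fun p : ℝ × ℝ => Real.exp (-p.1 - p.2)) (x, y))
        = (Ici (a + b * x)).indicator (fun y => Real.exp (-x - y)) := by
      funext y
      rw [Set.indicator_apply, Set.indicator_apply]
      simp only [hSdef, Set.mem_setOf_eq, Set.mem_Ici]
      by_cases h : a + b * x ≤ y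
      · simp [h, hxc]
      · simp [h]
    rw [e1, setIntegral_indicator measurableSet_Ici]
    have e2 : Ici (a + b * c) ∩ Ici (a + b * x) = Ici (a + b * x) := by
      rw [Set.inter_eq_self_of_subset_right (Ici_subset_Ici.mpr hbb)]
    rw [e2]
    have e3 : ∀ y : ℝ, Real.exp (-x - y) = Real.exp (-x) * Real.exp (-y) := by
      intro y; rw [← Real.exp_add]; ring_nf
    simp_rw [e3]
    rw [integral_const_mul, MeasureTheory.integral_Ici_eq_integral_Ioi, integral_exp_neg_Ioi]
  rw [step2]
  have step3 : ∫ x in Ici c, Real.exp (-x) * Real.exp (-(a + b * x))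
      = Real.exp (-a) * ∫ x in Ici c, Real.exp (-((1 + b) * x)) := by
    rw [← integral_const_mul]
    congr 1; funext x
    rw [← Real.exp_add, ← Real.exp_add]; ring_nf
  rw [step3, MeasureTheory.integral_Ici_eq_integral_Ioi, expInt c (by linarith : (0:ℝ) < 1 + b),
    ← mul_div_assoc, ← Real.exp_add]
  congr 2
  ring

lemma key' (a b c : ℝ) (hb : 0 ≤ b) :
    ∫ p in {p : ℝ × ℝ | c ≤ p.2 ∧ a + b * p.2 ≤ p.1}, Real.exp (-p.1 - p.2)
      = Real.exp (-(a + (1 + b) * c)) / (1 + b) := by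
  have hswap : MeasurePreserving (Prod.swap : ℝ × ℝ → ℝ × ℝ) volume volume := by
    rw [Measure.volume_eq_prod]
    exact Measure.measurePreserving_swap
  have hemb : MeasurableEmbedding (Prod.swap : ℝ × ℝ → ℝ × ℝ) :=
    MeasurableEquiv.prodComm.measurableEmbedding
  have hset : {p : ℝ × ℝ | c ≤ p.2 ∧ a + b * p.2 ≤ p.1}
      = Prod.swap ⁻¹' {p : ℝ × ℝ | c ≤ p.1 ∧ a + b * p.1 ≤ p.2} := rfl
  have h2 := hswap.setIntegral_preimage_emb hemb
    (fun p : ℝ × ℝ => Real.exp (-p.1 - p.2)) {p : ℝ × ℝ | c ≤ p.1 ∧ a + b * p.1 ≤ p.2}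
  rw [hset, ← key a b c hb, ← h2]
  apply setIntegral_congr_fun (hemb.measurable (measS a b c))
  intro p _
  simp only [Prod.swap, Prod.fst_swap, Prod.snd_swap]
  ring_nf

/-- Closed form of the SIC decoding probability (equation (27) of the paper,
case `θi · θj > 1`): the integral of the joint exponential density over the
decoding region equals the stated expression. -/
theorem stmt8 (lam mu θi θj : ℝ)
    (hlam : 0 < lam) (hmu : 0 < mu) (hθi : 0 < θi) (hθj : 0 < θj)
    (hprod : 1 < θi * θj)
    (A : Set (ℝ × ℝ))
    (hA : A = {p : ℝ × ℝ | 0 ≤ p.1 ∧ 0 ≤ p.2 ∧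
      ((p.1 / lam ≥ θi ∧ (p.2 / mu) / (1 + p.1 / lam) ≥ θj) ∨
       ((p.1 / lam) / (1 + p.2 / mu) ≥ θi ∧ (p.2 / mu) / (1 + p.1 / lam) < θj))}) :
    ∫ p in A, Real.exp (-p.1 - p.2) =
      Real.exp (-(lam * θi)) *
        (Real.exp (-(mu * θj * (1 + θi))) * (1 - mu / (lam / θj + mu)) +
          mu / (lam * θi + mu)) := by
  set S1 : Set (ℝ × ℝ) := {p : ℝ × ℝ | lam * θi ≤ p.1 ∧ mu * θj + mu * θj / lam * p.1 ≤ p.2}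
    with hS1def
  set S2 : Set (ℝ × ℝ) := {p : ℝ × ℝ | (0:ℝ) ≤ p.2 ∧ lam * θi + lam * θi / mu * p.2 ≤ p.1}
    with hS2def
  have hAeq : A = S1 ∪ S2 := by
    rw [hA]
    ext ⟨x, y⟩
    simp only [hS1def, hS2def, Set.mem_setOf_eq, Set.mem_union, ge_iff_le]
    constructor
    · rintro ⟨hx, hy, ⟨h1, h2⟩ | ⟨h1, h2⟩⟩
      · left
        have hxl : 0 ≤ x / lam := div_nonneg hx hlam.le
        have hden : 0 < 1 + x / lam := by linarith
        rw [le_div_iff₀ hlam] at h1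
        rw [le_div_iff₀ hden, le_div_iff₀ hmu] at h2
        have e : mu * θj + mu * θj / lam * x = θj * (1 + x / lam) * mu := by
          field_simp
        exact ⟨by linarith, by linarith⟩
      · right
        have hym : 0 ≤ y / mu := div_nonneg hy hmu.le
        have hden2 : 0 < 1 + y / mu := by linarith
        rw [le_div_iff₀ hden2, le_div_iff₀ hlam] at h1
        have e : lam * θi + lam * θi / mu * y = θi * (1 + y / mu) * lam := by
          field_simp
        exact ⟨hy, by linarith⟩
    · rintro (⟨h1, h2⟩ | ⟨h1, h2⟩)
      · have hx : 0 ≤ x := by nlinarith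
        have hbx : 0 ≤ mu * θj / lam * x := by positivity
        have hy : 0 ≤ y := by nlinarith
        have hxl : 0 ≤ x / lam := div_nonneg hx hlam.le
        have hden : 0 < 1 + x / lam := by linarith
        refine ⟨hx, hy, Or.inl ⟨?_, ?_⟩⟩
        · rw [le_div_iff₀ hlam]; linarith
        · rw [le_div_iff₀ hden, le_div_iff₀ hmu]
          have e : mu * θj + mu * θj / lam * x = θj * (1 + x / lam) * mu := by
            field_simp
          linarith
      · have hy : 0 ≤ y := h1
        have hterm : 0 ≤ lam * θi / mu * y := by positivity
        have hx : 0 ≤ x := by nlinarith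
        have hxl : 0 ≤ x / lam := div_nonneg hx hlam.le
        have hym : 0 ≤ y / mu := div_nonneg hy hmu.le
        have hden : 0 < 1 + x / lam := by linarith
        have hden2 : 0 < 1 + y / mu := by linarith
        have hu : θi * (1 + y / mu) ≤ x / lam := by
          rw [le_div_iff₀ hlam]
          have e : lam * θi + lam * θi / mu * y = θi * (1 + y / mu) * lam := by
            field_simp
          linarith
        refine ⟨hx, hy, Or.inr ⟨?_, ?_⟩⟩
        · rw [le_div_iff₀ hden2]; exact hu
        · rw [div_lt_iff₀ hden]
          nlinarith [mul_le_mul_of_nonneg_left hu hθj.le,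
            mul_nonneg (sub_nonneg.mpr hprod.le) hym]
  have hS2meas : MeasurableSet S2 := by
    apply MeasurableSet.inter
    · exact measurableSet_le measurable_const measurable_snd
    · exact measurableSet_le (measurable_const.add (measurable_snd.const_mul _)) measurable_fst
  have hdisj : Disjoint S1 S2 := by
    rw [Set.disjoint_left]
    rintro ⟨x, y⟩ ⟨h1, h2⟩ ⟨h3, h4⟩
    have e1 : mu * θj / lam * x = mu * θj * x / lam := by ring
    rw [e1] at h2
    have a1 : mu * θj * x ≤ (y - mu * θj) * lam := by
      rw [← div_le_iff₀ hlam]; linarith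
    have e2 : lam * θi / mu * y = lam * θi * y / mu := by ring
    rw [e2] at h4
    have a2 : lam * θi * y ≤ (x - lam * θi) * mu := by
      rw [← div_le_iff₀ hmu]; linarith
    have b1 : θj * (lam * θi * y) ≤ θj * ((x - lam * θi) * mu) :=
      mul_le_mul_of_nonneg_left a2 hθj.le
    have b2 : 0 ≤ lam * (θi * θj - 1) * y := by
      apply mul_nonneg (mul_nonneg hlam.le (by linarith)) h3
    nlinarith [b1, b2, a1, mul_pos (mul_pos hmu hθj) hlam,
      mul_pos (mul_pos (mul_pos hθj hlam) hθi) hmu]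
  have hi1 : IntegrableOn (fun p : ℝ × ℝ => Real.exp (-p.1 - p.2)) S1 := by
    refine (integOn (lam * θi) (mu * θj)).mono_set ?_
    rintro ⟨x, y⟩ ⟨h1, h2⟩
    have hx : 0 ≤ x := by nlinarith
    have : 0 ≤ mu * θj / lam * x := by positivity
    exact ⟨h1, by simp only [mem_Ici]; linarith⟩
  have hi2 : IntegrableOn (fun p : ℝ × ℝ => Real.exp (-p.1 - p.2)) S2 := by
    refine (integOn (lam * θi) 0).mono_set ?_
    rintro ⟨x, y⟩ ⟨h1, h2⟩
    have : 0 ≤ lam * θi / mu * y := by positivity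
    exact ⟨by simp only [mem_Ici]; linarith, h1⟩
  rw [hAeq, setIntegral_union hdisj hS2meas hi1 hi2,
    hS1def, key (mu * θj) (mu * θj / lam) (lam * θi) (by positivity),
    hS2def, key' (lam * θi) (lam * θi / mu) 0 (by positivity)]
  have e1 : -(mu * θj + (1 + mu * θj / lam) * (lam * θi))
      = -(lam * θi) + -(mu * θj * (1 + θi)) := by field_simp; ring
  have e2 : -(lam * θi + (1 + lam * θi / mu) * 0) = -(lam * θi) := by ring
  rw [e1, e2, Real.exp_add]
  have d1 : (0:ℝ) < 1 + mu * θj / lam := by positivity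
  have d2 : (0:ℝ) < 1 + lam * θi / mu := by positivity
  have d3 : (0:ℝ) < lam / θj + mu := by positivity
  have d4 : (0:ℝ) < lam * θi + mu := by positivity
  field_simp
  ring
end
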